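/- arXiv:1602.07409 — 5 statements merged into one kernel-verified Lean document; each statement's English description precedes it below -/
import Mathlib

section
/- Let A be a set and → a binary relation on A such that the converse relation is well-founded (equivalently, there is no infinite reduction sequence a₀ → a₁ → a₂ → ⋯). Write ↠ for the reflexive-transitive closure of →. Then → is confluent (for all a, b, c with a ↠ b and a ↠ c there exists d with b ↠ d and c ↠ d) if and only if → is locally confluent (for all a, b, c with a → b and a → c there exists d with b ↠ d and c ↠ d). -/
/-- Newman's Diamond Lemma: for a terminating abstract rewriting system
(the converse relation is well-founded), the relation is confluent if and
only if it is locally confluent. -/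
theorem newman_diamond_lemma {A : Type*} (r : A → A → Prop)
    (hterm : WellFounded (fun a b => r b a)) :
    (∀ a b c, Relation.ReflTransGen r a b → Relation.ReflTransGen r a c →
      ∃ d, Relation.ReflTransGen r b d ∧ Relation.ReflTransGen r c d) ↔
    (∀ a b c, r a b → r a c →
      ∃ d, Relation.ReflTransGen r b d ∧ Relation.ReflTransGen r c d) := by
  constructor
  · intro h a b c hab hac
    exact h a b c (Relation.ReflTransGen.single hab) (Relation.ReflTransGen.single hac)
  · intro hloc
    intro a
    induction a using hterm.induction with
    | _ a ih =>
      intro b c hab hac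
      rcases hab.cases_head with rfl | ⟨b₁, hb₁, hb₁b⟩
      · exact ⟨c, hac, Relation.ReflTransGen.refl⟩
      rcases hac.cases_head with rfl | ⟨c₁, hc₁, hc₁c⟩
      · exact ⟨b, Relation.ReflTransGen.refl, hab⟩
      obtain ⟨d, hbd, hcd⟩ := hloc a b₁ c₁ hb₁ hc₁
      obtain ⟨e, hbe, hde⟩ := ih b₁ hb₁ b d hb₁b hbd
      obtain ⟨f, hcf, hef⟩ := ih c₁ hc₁ c e hc₁c (hcd.trans hde)
      exact ⟨f, hbe.trans hef, hcf⟩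
end

section
/- Let k be a field and M a linearly ordered type of monomials whose strict order is well-founded. Let T be a set of monic polynomials in M →₀ k, and let → be the associated one-step reduction relation. Then → is terminating: the converse relation of → is well-founded, i.e., there is no infinite reduction sequence f₀ → f₁ → f₂ → ⋯. -/
open Finsupp Relation

variable {k M : Type*}

/-- The leading monomial of a nonzero polynomial `f : M →₀ k`: the maximum of its support. -/
noncomputable def leadMon [Zero k] [LinearOrder M] (f : M →₀ k) (hf : f ≠ 0) : M :=
  f.support.max' (Finsupp.support_nonempty_iff.mpr hf)

/-- A polynomial is monic if it is nonzero and its leading coefficient equals 1. -/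
def IsMonic [Field k] [LinearOrder M] (f : M →₀ k) : Prop :=
  ∃ hf : f ≠ 0, f (leadMon f hf) = 1

/-- The one-step reduction relation associated with a set `T` of (monic) polynomials:
`f → g` iff there is `h ∈ T` with `f (lead h) ≠ 0` and `g = f - f (lead h) • h`. -/
def StepRel [Field k] [LinearOrder M] (T : Set (M →₀ k)) (f g : M →₀ k) : Prop :=
  ∃ h ∈ T, ∃ hh : h ≠ 0, f (leadMon h hh) ≠ 0 ∧ g = f - f (leadMon h hh) • h

/-- If the monomial order is well-founded, the one-step reduction relation associated
with a set of monic polynomials is terminating: its converse is well-founded. -/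
theorem stepRel_terminating [Field k] [LinearOrder M]
    (hwf : WellFounded ((· < ·) : M → M → Prop))
    (T : Set (M →₀ k)) (hT : ∀ f ∈ T, IsMonic f) :
    WellFounded (fun f g : M →₀ k => StepRel T g f) := by
  set s : k → k → Prop := fun x y => x = 0 ∧ y ≠ 0 with hs
  have hswf : WellFounded s := by
    constructor
    intro x
    constructor
    intro y hy
    constructor
    intro z hz
    exact absurd hy.1 hz.2
  have hlex : WellFounded (Finsupp.Lex ((· > ·) : M → M → Prop) s) :=
    Finsupp.Lex.wellFounded' (fun n hn => hn.2 rfl) hswf hwf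
  refine Subrelation.wf ?_ hlex
  rintro f g ⟨h, hm, hh, hfne, rfl⟩
  refine ⟨leadMon h hh, fun b hb => ?_, ?_⟩
  · have hb0 : h b = 0 := by
      rw [← Finsupp.notMem_support_iff]
      intro hmem
      exact absurd (Finset.le_max' _ _ hmem) (not_le.mpr hb)
    simp [hb0]
  · obtain ⟨hh', hone⟩ := hT h hm
    have : h (leadMon h hh) = 1 := hone
    constructor
    · simp [this]
    · exact hfne
end

section
/- Let k be a field, M a linearly ordered type of monomials, T a set of monic polynomials in M →₀ k with associated one-step reduction relation →, and V a k-subspace of M →₀ k. Write ~_V for the equivalence closure of → restricted to V (both endpoints of every step lie in V). Then for all f, g, p ∈ V: f ~_V g if and only if (f + p) ~_V (g + p). -/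
open Finsupp Relation

variable {k M : Type*}

/-- The one-step reduction relation restricted to a subspace `V`: both endpoints lie in `V`. -/
def StepRelOn [Field k] [LinearOrder M] (T : Set (M →₀ k)) (V : Submodule k (M →₀ k))
    (f g : M →₀ k) : Prop :=
  f ∈ V ∧ g ∈ V ∧ StepRel T f g

lemma eqvGen_sub_smul [Field k] [LinearOrder M]
    (T : Set (M →₀ k)) (hT : ∀ f ∈ T, IsMonic f) (V : Submodule k (M →₀ k))
    {h : M →₀ k} (hhT : h ∈ T) (hhV : h ∈ V) (x : M →₀ k) (hx : x ∈ V) (c : k) :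
    Relation.EqvGen (StepRelOn T V) x (x - c • h) := by
  obtain ⟨hne, hmon⟩ := hT h hhT
  set m := leadMon h hne with hm
  by_cases hc : c = 0
  · simpa [hc] using Relation.EqvGen.refl x
  have hyV : x - c • h ∈ V := V.sub_mem hx (V.smul_mem c hhV)
  have hym : (x - c • h) m = x m - c := by
    simp [Finsupp.sub_apply, hmon]
  by_cases hd : x m = c
  · refine Relation.EqvGen.rel _ _ ⟨hx, hyV, h, hhT, hne, ?_, ?_⟩
    · rw [← hm, hd]; exact hc
    · rw [← hm, hd]
  · by_cases hd0 : x m = 0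
    · refine Relation.EqvGen.symm _ _ (Relation.EqvGen.rel _ _ ⟨hyV, hx, h, hhT, hne, ?_, ?_⟩)
      · rw [← hm, hym, hd0]
        simpa using hc
      · rw [← hm, hym, hd0]
        simp [sub_smul]
    · have hxV2 : x - x m • h ∈ V := V.sub_mem hx (V.smul_mem _ hhV)
      refine Relation.EqvGen.trans _ (x - x m • h) _
        (Relation.EqvGen.rel _ _ ⟨hx, hxV2, h, hhT, hne, by rw [← hm]; exact hd0, by rw [← hm]⟩)
        (Relation.EqvGen.symm _ _ (Relation.EqvGen.rel _ _ ⟨hyV, hxV2, h, hhT, hne, ?_, ?_⟩))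
      · rw [← hm, hym]
        exact sub_ne_zero.mpr hd
      · rw [← hm, hym, sub_smul]
        abel

lemma eqvGen_add_of [Field k] [LinearOrder M]
    (T : Set (M →₀ k)) (hT : ∀ f ∈ T, IsMonic f) (V : Submodule k (M →₀ k))
    {f g : M →₀ k} (p : M →₀ k) (hp : p ∈ V)
    (hfg : Relation.EqvGen (StepRelOn T V) f g) :
    Relation.EqvGen (StepRelOn T V) (f + p) (g + p) := by
  induction hfg with
  | rel a b hab =>
    obtain ⟨haV, hbV, h, hhT, hne, hc, hb⟩ := hab
    have hc0 : a (leadMon h hne) ≠ 0 := hc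
    have hhV : h ∈ V := by
      have : (a (leadMon h hne))⁻¹ • (a - b) ∈ V :=
        V.smul_mem _ (V.sub_mem haV hbV)
      rwa [hb, sub_sub_cancel, inv_smul_smul₀ hc0] at this
    have := eqvGen_sub_smul T hT V hhT hhV (a + p) (V.add_mem haV hp) (a (leadMon h hne))
    rwa [show a + p - a (leadMon h hne) • h = b + p by rw [hb]; abel] at this
  | refl a => exact Relation.EqvGen.refl _
  | symm a b _ ih => exact Relation.EqvGen.symm _ _ ih
  | trans a b c _ _ ih1 ih2 => exact Relation.EqvGen.trans _ _ _ ih1 ih2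

/-- Translation invariance: for `f, g, p` in a subspace `V`, `f ~_V g` iff `f + p ~_V g + p`,
where `~_V` is the equivalence closure of the reduction relation restricted to `V`. -/
theorem eqvGen_stepRelOn_add_iff [Field k] [LinearOrder M]
    (T : Set (M →₀ k)) (hT : ∀ f ∈ T, IsMonic f) (V : Submodule k (M →₀ k))
    (f g p : M →₀ k) (hf : f ∈ V) (hg : g ∈ V) (hp : p ∈ V) :
    Relation.EqvGen (StepRelOn T V) f g ↔ Relation.EqvGen (StepRelOn T V) (f + p) (g + p) := by
  constructor
  · exact eqvGen_add_of T hT V p hp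
  · intro hfg
    have := eqvGen_add_of T hT V (-p) (V.neg_mem hp) hfg
    simpa using this
end

section
/- Let k be a field and M a linearly ordered type of monomials whose strict order is well-founded. Let T be a set of monic polynomials in M →₀ k with associated one-step reduction relation →. Suppose that for every monomial m ∈ M and every pair of one-step reductions single(m,1) → g₁ and single(m,1) → g₂ (where single(m,1) is the polynomial with coefficient 1 at m and 0 elsewhere), the difference g₁ − g₂ lies in the k-linear span of the set of those h ∈ T with lead(h) < m. Then → is confluent: for all f, g₁, g₂ with f ↠ g₁ and f ↠ g₂ there exists g with g₁ ↠ g and g₂ ↠ g, where ↠ is the reflexive-transitive closure of →. -/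
/-!
Every reduction sequence acts through a product of the linear maps `f ↦ f - f (lead h) • h`,
so the pairs `(f, n)` with `n` reduced and every reduct of `f` reducing further to `n` form a
`k`-submodule. It therefore suffices to find such an `n` for each monomial `single m 1`, by
well-founded induction on `m`: every one-step reduct of `single m 1` differs from a fixed one
`g₀` by an element of the span of the elements of `T` with leading monomial below `m`, each of
which reduces to `0` in one step, and `g₀` and those elements are supported below `m`.
-/

open Finsupp Relation

variable {k M : Type*}

section Reduction

variable [Field k] [LinearOrder M] {T : Set (M →₀ k)}

lemma le_leadMon {f : M →₀ k} (hf : f ≠ 0) {m : M} (hm : f m ≠ 0) : m ≤ leadMon f hf :=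
  Finset.le_max' _ m (mem_support_iff.mpr hm)

lemma apply_eq_zero_of_leadMon_lt {f : M →₀ k} (hf : f ≠ 0) {m : M} (hm : leadMon f hf < m) :
    f m = 0 :=
  by_contra fun h => (le_leadMon hf h).not_gt hm

lemma mem_supported_Iio_of_leadMon_lt {f : M →₀ k} (hf : f ≠ 0) {m : M}
    (hm : leadMon f hf < m) : f ∈ supported k k (Set.Iio m) :=
  fun _ hx => (le_leadMon hf (mem_support_iff.mp hx)).trans_lt hm

lemma IsMonic.sub_single_leadMon_mem_supported {h : M →₀ k} (hmon : IsMonic h) (hh : h ≠ 0) :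
    h - single (leadMon h hh) 1 ∈ supported k k (Set.Iio (leadMon h hh)) := by
  obtain ⟨_, hlead⟩ := hmon
  refine (mem_supported' k _).mpr fun x hx => ?_
  rcases (not_lt.mp hx).eq_or_lt with rfl | hlt
  · simp [hlead]
  · simp [apply_eq_zero_of_leadMon_lt hh hlt, hlt.ne]

lemma stepRel_zero_of_mem (hT : ∀ f ∈ T, IsMonic f) {h : M →₀ k} (hmem : h ∈ T) (hh : h ≠ 0) :
    StepRel T h 0 := by
  obtain ⟨_, hlead⟩ := hT h hmem
  exact ⟨h, hmem, hh, by simp [hlead], by simp [hlead]⟩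

lemma mem_supported_Iio_of_stepRel_single (hT : ∀ f ∈ T, IsMonic f) {m : M} {g : M →₀ k}
    (hg : StepRel T (single m 1) g) : g ∈ supported k k (Set.Iio m) := by
  obtain ⟨h, hmem, hh, hne, rfl⟩ := hg
  obtain rfl : leadMon h hh = m := (single_apply_ne_zero.mp hne).1
  have htail := (hT h hmem).sub_single_leadMon_mem_supported hh
  rw [single_eq_same, one_smul, ← neg_sub]
  exact neg_mem htail

def IsReducedWrt (T : Set (M →₀ k)) (f : M →₀ k) : Prop :=
  ∀ h ∈ T, ∀ hh : h ≠ 0, f (leadMon h hh) = 0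

lemma isReducedWrt_zero : IsReducedWrt T (0 : M →₀ k) :=
  fun _ _ _ => rfl

lemma IsReducedWrt.add {f g : M →₀ k} (hf : IsReducedWrt T f) (hg : IsReducedWrt T g) :
    IsReducedWrt T (f + g) := fun h hmem hh => by
  rw [Finsupp.add_apply, hf h hmem hh, hg h hmem hh, add_zero]

lemma IsReducedWrt.smul {f : M →₀ k} (c : k) (hf : IsReducedWrt T f) : IsReducedWrt T (c • f) :=
  fun h hmem hh => by rw [Finsupp.smul_apply, hf h hmem hh, smul_zero]

lemma isReducedWrt_iff_forall_not_stepRel {f : M →₀ k} :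
    IsReducedWrt T f ↔ ∀ g, ¬StepRel T f g := by
  refine ⟨fun hf g ⟨h, hmem, hh, hne, _⟩ => hne (hf h hmem hh), fun hf h hmem hh => ?_⟩
  by_contra hne
  exact hf _ ⟨h, hmem, hh, hne, rfl⟩

lemma IsReducedWrt.eq_of_reflTransGen {f g : M →₀ k} (hf : IsReducedWrt T f)
    (hfg : ReflTransGen (StepRel T) f g) : g = f := by
  rcases hfg.cases_head with rfl | ⟨_, hstep, _⟩
  · rfl
  · exact absurd hstep (isReducedWrt_iff_forall_not_stepRel.mp hf _)

noncomputable def reduceBy (h : M →₀ k) (hh : h ≠ 0) : Module.End k (M →₀ k) :=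
  LinearMap.id - (lapply (leadMon h hh)).smulRight h

lemma reduceBy_apply (h : M →₀ k) (hh : h ≠ 0) (f : M →₀ k) :
    reduceBy h hh f = f - f (leadMon h hh) • h :=
  rfl

def reductionOps (T : Set (M →₀ k)) : Submonoid (Module.End k (M →₀ k)) where
  carrier := {L | ∀ f, ReflTransGen (StepRel T) f (L f)}
  one_mem' _ := .refl
  mul_mem' hL₁ hL₂ f := (hL₂ f).trans (hL₁ _)

lemma reduceBy_mem_reductionOps {h : M →₀ k} (hmem : h ∈ T) (hh : h ≠ 0) :
    reduceBy h hh ∈ reductionOps T := fun f => by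
  by_cases hf : f (leadMon h hh) = 0
  · rw [reduceBy_apply, hf, zero_smul, sub_zero]
  · exact .single ⟨h, hmem, hh, hf, rfl⟩

lemma exists_mem_reductionOps_of_reflTransGen {f g : M →₀ k}
    (hfg : ReflTransGen (StepRel T) f g) : ∃ L ∈ reductionOps T, L f = g := by
  induction hfg with
  | refl => exact ⟨1, one_mem _, rfl⟩
  | tail _ hstep ih =>
    obtain ⟨L, hL, rfl⟩ := ih
    obtain ⟨h, hmem, hh, -, rfl⟩ := hstep
    exact ⟨reduceBy h hh * L, mul_mem (reduceBy_mem_reductionOps hmem hh) hL, rfl⟩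

lemma IsReducedWrt.apply_eq_of_mem_reductionOps {n : M →₀ k} (hn : IsReducedWrt T n)
    {L : Module.End k (M →₀ k)} (hL : L ∈ reductionOps T) : L n = n :=
  hn.eq_of_reflTransGen (hL n)

def IsUniqueNormalForm (T : Set (M →₀ k)) (f n : M →₀ k) : Prop :=
  IsReducedWrt T n ∧ ∀ g, ReflTransGen (StepRel T) f g → ReflTransGen (StepRel T) g n

lemma IsReducedWrt.isUniqueNormalForm_self {n : M →₀ k} (hn : IsReducedWrt T n) :
    IsUniqueNormalForm T n n :=
  ⟨hn, fun _ hg => hn.eq_of_reflTransGen hg ▸ .refl⟩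

lemma IsUniqueNormalForm.eq_of_reflTransGen {f g n : M →₀ k} (hfn : IsUniqueNormalForm T f n)
    (hfg : ReflTransGen (StepRel T) f g) (hg : IsReducedWrt T g) : g = n :=
  (hg.eq_of_reflTransGen (hfn.2 g hfg)).symm

lemma IsUniqueNormalForm.add {a b na nb : M →₀ k} (ha : IsUniqueNormalForm T a na)
    (hb : IsUniqueNormalForm T b nb) : IsUniqueNormalForm T (a + b) (na + nb) := by
  refine ⟨ha.1.add hb.1, fun s hs => ?_⟩
  obtain ⟨L, hL, rfl⟩ := exists_mem_reductionOps_of_reflTransGen hs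
  obtain ⟨L₁, hL₁, hL₁a⟩ := exists_mem_reductionOps_of_reflTransGen (ha.2 _ (hL a))
  obtain ⟨L₂, hL₂, hL₂b⟩ :=
    exists_mem_reductionOps_of_reflTransGen (hb.2 _ ((hL b).trans (hL₁ (L b))))
  have hfirst : ReflTransGen (StepRel T) (L (a + b)) (na + L₁ (L b)) := by
    simpa only [map_add, hL₁a] using hL₁ (L (a + b))
  have hsecond : ReflTransGen (StepRel T) (na + L₁ (L b)) (na + nb) := by
    simpa only [map_add, hL₂b, ha.1.apply_eq_of_mem_reductionOps hL₂] using hL₂ (na + L₁ (L b))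
  exact hfirst.trans hsecond

lemma IsUniqueNormalForm.smul {a n : M →₀ k} (c : k) (ha : IsUniqueNormalForm T a n) :
    IsUniqueNormalForm T (c • a) (c • n) := by
  refine ⟨ha.1.smul c, fun g hg => ?_⟩
  obtain ⟨L, hL, rfl⟩ := exists_mem_reductionOps_of_reflTransGen hg
  obtain ⟨L₁, hL₁, hL₁a⟩ := exists_mem_reductionOps_of_reflTransGen (ha.2 _ (hL a))
  simpa only [map_smul, hL₁a] using hL₁ (L (c • a))

def normalFormGraph (T : Set (M →₀ k)) : Submodule k ((M →₀ k) × (M →₀ k)) where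
  carrier := {p | IsUniqueNormalForm T p.1 p.2}
  add_mem' := IsUniqueNormalForm.add
  zero_mem' := isReducedWrt_zero.isUniqueNormalForm_self
  smul_mem' c _ hp := hp.smul c

lemma mem_normalFormGraph {p : (M →₀ k) × (M →₀ k)} :
    p ∈ normalFormGraph T ↔ IsUniqueNormalForm T p.1 p.2 :=
  Iff.rfl

lemma exists_isUniqueNormalForm_of_mem_supported {s : Set M}
    (hs : ∀ m ∈ s, ∃ n, IsUniqueNormalForm T (single m 1) n) {f : M →₀ k}
    (hf : f ∈ supported k k s) : ∃ n, IsUniqueNormalForm T f n := by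
  have hle : supported k k s ≤ (normalFormGraph T).map (LinearMap.fst k _ _) := by
    rw [supported_eq_span_single, Submodule.span_le]
    rintro _ ⟨m, hm, rfl⟩
    obtain ⟨n, hn⟩ := hs m hm
    exact ⟨(single m 1, n), hn, rfl⟩
  obtain ⟨⟨_, n⟩, hn, rfl⟩ := hle hf
  exact ⟨n, hn⟩

lemma span_lower_le_comap_inl_normalFormGraph (hT : ∀ f ∈ T, IsMonic f) {m : M}
    (hbelow : ∀ f ∈ supported k k (Set.Iio m), ∃ n, IsUniqueNormalForm T f n) :
    Submodule.span k {h : M →₀ k | h ∈ T ∧ ∃ hh : h ≠ 0, leadMon h hh < m} ≤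
      (normalFormGraph T).comap (LinearMap.inl k _ _) := by
  rw [Submodule.span_le]
  rintro x ⟨hxT, hx, hlt⟩
  obtain ⟨n, hn⟩ := hbelow x (mem_supported_Iio_of_leadMon_lt hx hlt)
  obtain rfl : 0 = n :=
    hn.eq_of_reflTransGen (.single (stepRel_zero_of_mem hT hxT hx)) isReducedWrt_zero
  exact hn

lemma exists_isUniqueNormalForm_single (hwf : WellFounded ((· < ·) : M → M → Prop))
    (hT : ∀ f ∈ T, IsMonic f)
    (hamb : ∀ m : M, ∀ g₁ g₂ : M →₀ k,
      StepRel T (single m 1) g₁ → StepRel T (single m 1) g₂ →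
      g₁ - g₂ ∈ Submodule.span k {h : M →₀ k | h ∈ T ∧ ∃ hh : h ≠ 0, leadMon h hh < m})
    (m : M) : ∃ n, IsUniqueNormalForm T (single m 1) n := by
  induction m using hwf.induction with
  | _ m ih =>
    have hbelow : ∀ f ∈ supported k k (Set.Iio m), ∃ n, IsUniqueNormalForm T f n :=
      fun _ => exists_isUniqueNormalForm_of_mem_supported ih
    by_cases hred : IsReducedWrt T (single m 1)
    · exact ⟨_, hred.isUniqueNormalForm_self⟩
    obtain ⟨g₀, hg₀⟩ : ∃ g₀, StepRel T (single m 1) g₀ := by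
      simpa [isReducedWrt_iff_forall_not_stepRel] using hred
    obtain ⟨n₀, hn₀⟩ := hbelow g₀ (mem_supported_Iio_of_stepRel_single hT hg₀)
    refine ⟨n₀, hn₀.1, fun g hg => ?_⟩
    rcases hg.cases_head with rfl | ⟨g₁, hg₁, hg₁g⟩
    · exact (hn₀.2 g₀ .refl).head hg₀
    have hdiff : IsUniqueNormalForm T (g₀ - g₁) 0 :=
      span_lower_le_comap_inl_normalFormGraph hT hbelow (hamb m g₀ g₁ hg₀ hg₁)
    have hg₁n₀ := (normalFormGraph T).sub_mem (x := (g₀, n₀)) (y := (g₀ - g₁, 0)) hn₀ hdiff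
    rw [Prod.mk_sub_mk, sub_sub_cancel, sub_zero, mem_normalFormGraph] at hg₁n₀
    exact hg₁n₀.2 g hg₁g

end Reduction

/-- If every pair of one-step reductions of a single monomial `single m 1` has a
difference lying in the span of the elements of `T` with leading monomial `< m`,
then the reduction relation is confluent. -/
theorem stepRel_confluent [Field k] [LinearOrder M]
    (hwf : WellFounded ((· < ·) : M → M → Prop))
    (T : Set (M →₀ k)) (hT : ∀ f ∈ T, IsMonic f)
    (hamb : ∀ m : M, ∀ g₁ g₂ : M →₀ k,
      StepRel T (Finsupp.single m 1) g₁ → StepRel T (Finsupp.single m 1) g₂ →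
      g₁ - g₂ ∈ Submodule.span k {h : M →₀ k | h ∈ T ∧ ∃ hh : h ≠ 0, leadMon h hh < m}) :
    ∀ f g₁ g₂ : M →₀ k, Relation.ReflTransGen (StepRel T) f g₁ →
      Relation.ReflTransGen (StepRel T) f g₂ →
      ∃ g : M →₀ k, Relation.ReflTransGen (StepRel T) g₁ g ∧
        Relation.ReflTransGen (StepRel T) g₂ g := by
  intro f g₁ g₂ h₁ h₂
  have hf : f ∈ supported k k Set.univ := by simp only [supported_univ, Submodule.mem_top]
  obtain ⟨n, hn⟩ := exists_isUniqueNormalForm_of_mem_supported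
    (fun m _ => exists_isUniqueNormalForm_single hwf hT hamb m) hf
  exact ⟨n, hn.2 g₁ h₁, hn.2 g₂ h₂⟩
end

section
/- Let k be a field and M a linearly ordered type of monomials whose strict order is well-founded. Let T be a set of monic polynomials in M →₀ k with associated one-step reduction relation →. Suppose that for every monomial m ∈ M and every pair of one-step reductions single(m,1) → g₁ and single(m,1) → g₂, the difference g₁ − g₂ lies in the k-linear span of the set of those h ∈ T with lead(h) < m. Call a polynomial g reduced if the support of g contains no monomial of the form lead(h) with h ∈ T. Then every f ∈ M →₀ k has a unique reduced form: there exists a unique reduced g ∈ M →₀ k such that f − g lies in the k-linear span of T. -/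
open Finsupp Relation

variable {k M : Type*}

/-- A polynomial is reduced (w.r.t. `T`) if its support contains no leading
monomial of an element of `T`. -/
def IsReducedPoly [Field k] [LinearOrder M] (T : Set (M →₀ k)) (g : M →₀ k) : Prop :=
  ∀ h ∈ T, ∀ hh : h ≠ 0, leadMon h hh ∉ g.support

/-!
Define a `k`-linear normal-form map `N` by well-founded recursion on monomials: `N m = m` if `m`
is not the leading monomial of an element of `T`, and otherwise `N m = N (m - h)` for a chosen
`h ∈ T` with leading monomial `m`; as `h` is monic, `m - h` only involves smaller monomials.
Then `N f` is reduced, `f - N f ∈ span T`, and `N` fixes reduced polynomials. Two choices `h, h'`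
for `m` differ by an element of the span of the elements of `T` with smaller leading monomials,
so by induction on `m` the map `N` kills `T`, hence `span T`. Thus a reduced `g` with
`f - g ∈ span T` satisfies `g = N g = N f`.
-/

lemma Finsupp.linearCombination_mem {R N α : Type*} [Semiring R] [AddCommMonoid N] [Module R N]
    {v : α → N} {p : Submodule R N} {l : α →₀ R} (h : ∀ x ∈ l.support, v x ∈ p) :
    linearCombination R v l ∈ p :=
  p.sum_mem fun x hx => p.smul_mem _ (h x hx)

lemma le_leadMon_s7 [Zero k] [LinearOrder M] {f : M →₀ k} (hf : f ≠ 0) {x : M}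
    (hx : x ∈ f.support) : x ≤ leadMon f hf :=
  f.support.le_max' x hx

lemma lt_of_mem_support_single_sub [Ring k] [LinearOrder M] {h : M →₀ k} (hh : h ≠ 0)
    (h1 : h (leadMon h hh) = 1) {m : M} (hm : leadMon h hh = m) {x : M}
    (hx : x ∈ (single m 1 - h).support) : x < m := by
  subst hm
  refine lt_of_le_of_ne ?_ ?_
  · rcases Finset.mem_union.mp (support_sub hx) with hs | hs
    · exact (Finset.mem_singleton.mp (support_single_subset hs)).le
    · exact le_leadMon_s7 hh hs
  · rintro rfl
    simp [h1] at hx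

lemma stepRel_single_sub [Field k] [LinearOrder M] {T : Set (M →₀ k)} {h : M →₀ k}
    (hT : h ∈ T) (hh : h ≠ 0) {m : M} (hm : leadMon h hh = m) :
    StepRel T (single m 1) (single m 1 - h) := by
  subst hm
  exact ⟨h, hT, hh, by simp, by simp⟩

section NormalForm

variable [Field k] [LinearOrder M] (T : Set (M →₀ k))

def IsLeadMon (m : M) : Prop := ∃ h ∈ T, ∃ hh : h ≠ 0, leadMon h hh = m

def reducedPolys : Submodule k (M →₀ k) := supported k k {m | ¬ IsLeadMon T m}

lemma mem_reducedPolys {g : M →₀ k} : g ∈ reducedPolys T ↔ IsReducedPoly T g := by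
  simp only [reducedPolys, mem_supported, Set.subset_def, IsReducedPoly, IsLeadMon]
  exact ⟨fun hg h hT hh hm => hg _ hm ⟨h, hT, hh, rfl⟩,
    fun hg x hx ⟨h, hT, hh, hm⟩ => hg h hT hh (hm ▸ hx)⟩

variable {T} in
lemma IsLeadMon.lt_of_mem_support (hT : ∀ f ∈ T, IsMonic f) {m : M} (H : IsLeadMon T m)
    {x : M} (hx : x ∈ (single m 1 - H.choose).support) : x < m := by
  obtain ⟨hmem, hh, hm⟩ := H.choose_spec
  exact lt_of_mem_support_single_sub hh (hT _ hmem).2 hm hx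

variable [WellFoundedLT M]

/- The guard `x < m` only serves the recursion: the support of `single m 1 - H.choose` lies
below `m`, so it never fails where it matters. -/
open Classical in
noncomputable def normalFormMon : M → M →₀ k :=
  WellFoundedLT.fix fun m rec =>
    if H : IsLeadMon T m then
      linearCombination k (fun x => if hx : x < m then rec x hx else 0) (single m 1 - H.choose)
    else single m 1

noncomputable def normalForm : (M →₀ k) →ₗ[k] M →₀ k := linearCombination k (normalFormMon T)

lemma normalForm_single (m : M) : normalForm T (single m 1) = normalFormMon T m := by
  simp [normalForm]

lemma sub_normalForm (f : M →₀ k) :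
    f - normalForm T f = linearCombination k (fun x => single x 1 - normalFormMon T x) f := by
  simp [normalForm, linearCombination_apply, smul_sub, sum_sub]

lemma normalFormMon_of_not_isLeadMon {m : M} (hm : ¬ IsLeadMon T m) :
    normalFormMon T m = single m 1 := by
  rw [normalFormMon, WellFoundedLT.fix_eq, dif_neg hm]

lemma normalFormMon_of_isLeadMon (hT : ∀ f ∈ T, IsMonic f) {m : M} (H : IsLeadMon T m) :
    normalFormMon T m = normalForm T (single m 1 - H.choose) := by
  rw [normalFormMon, WellFoundedLT.fix_eq, dif_pos H, normalForm, linearCombination_apply,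
    linearCombination_apply]
  exact sum_congr fun x hx => by rw [dif_pos (H.lt_of_mem_support hT hx)]; rfl

lemma normalForm_choose_eq_zero (hT : ∀ f ∈ T, IsMonic f) {m : M} (H : IsLeadMon T m) :
    normalForm T H.choose = 0 := by
  have h := normalFormMon_of_isLeadMon T hT H
  rwa [← normalForm_single, map_sub, eq_comm, sub_eq_self] at h

lemma normalFormMon_mem_reducedPolys (hT : ∀ f ∈ T, IsMonic f) (m : M) :
    normalFormMon T m ∈ reducedPolys T := by
  induction m using WellFoundedLT.induction with
  | ind m ih =>
    by_cases H : IsLeadMon T m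
    · rw [normalFormMon_of_isLeadMon T hT H]
      exact linearCombination_mem fun x hx => ih x (H.lt_of_mem_support hT hx)
    · rw [normalFormMon_of_not_isLeadMon T H]
      exact single_mem_supported k 1 H

lemma normalForm_mem_reducedPolys (hT : ∀ f ∈ T, IsMonic f) (f : M →₀ k) :
    normalForm T f ∈ reducedPolys T :=
  linearCombination_mem fun m _ => normalFormMon_mem_reducedPolys T hT m

lemma single_sub_normalFormMon_mem_span (hT : ∀ f ∈ T, IsMonic f) (m : M) :
    single m 1 - normalFormMon T m ∈ Submodule.span k T := by
  induction m using WellFoundedLT.induction with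
  | ind m ih =>
    by_cases H : IsLeadMon T m
    · have htail : single m 1 - H.choose - normalForm T (single m 1 - H.choose) ∈
          Submodule.span k T := by
        rw [sub_normalForm]
        exact linearCombination_mem fun x hx => ih x (H.lt_of_mem_support hT hx)
      rw [normalFormMon_of_isLeadMon T hT H, ← sub_add_sub_cancel _ (single m 1 - H.choose),
        sub_sub_cancel]
      exact add_mem (Submodule.subset_span H.choose_spec.1) htail
    · simp [normalFormMon_of_not_isLeadMon T H]

lemma sub_normalForm_mem_span (hT : ∀ f ∈ T, IsMonic f) (f : M →₀ k) :
    f - normalForm T f ∈ Submodule.span k T := by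
  rw [sub_normalForm]
  exact linearCombination_mem fun m _ => single_sub_normalFormMon_mem_span T hT m

lemma normalForm_eq_self {g : M →₀ k} (hg : g ∈ reducedPolys T) : normalForm T g = g := by
  rw [← sub_eq_zero, ← neg_sub, neg_eq_zero, sub_normalForm, ← Submodule.mem_bot k]
  exact linearCombination_mem fun x hx => by
    rw [normalFormMon_of_not_isLeadMon T (hg hx), sub_self]
    exact zero_mem _

lemma normalForm_eq_zero_of_mem (hT : ∀ f ∈ T, IsMonic f)
    (hamb : ∀ m : M, ∀ g₁ g₂ : M →₀ k,
      StepRel T (single m 1) g₁ → StepRel T (single m 1) g₂ →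
      g₁ - g₂ ∈ Submodule.span k {h : M →₀ k | h ∈ T ∧ ∃ hh : h ≠ 0, leadMon h hh < m})
    {h : M →₀ k} (hhT : h ∈ T) : normalForm T h = 0 := by
  suffices ∀ m : M, ∀ h ∈ T, ∀ hh : h ≠ 0, leadMon h hh = m → normalForm T h = 0 from
    this _ h hhT (hT h hhT).1 rfl
  intro m
  induction m using WellFoundedLT.induction with
  | ind m ih =>
    intro h hhT hh hm
    have H : IsLeadMon T m := ⟨h, hhT, hh, hm⟩
    obtain ⟨hT₀, hh₀, hm₀⟩ := H.choose_spec
    have hlower : Submodule.span k {h : M →₀ k | h ∈ T ∧ ∃ hh : h ≠ 0, leadMon h hh < m} ≤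
        LinearMap.ker (normalForm T) :=
      Submodule.span_le.mpr fun h' ⟨hT', hh', hlt⟩ => ih _ hlt h' hT' hh' rfl
    have hdiff := hlower <| hamb m _ _ (stepRel_single_sub hhT hh hm)
      (stepRel_single_sub hT₀ hh₀ hm₀)
    rwa [sub_sub_sub_cancel_left, LinearMap.mem_ker, map_sub,
      normalForm_choose_eq_zero T hT H, zero_sub, neg_eq_zero] at hdiff

end NormalForm

/-- Under the local confluence condition on monomials, every polynomial `f` has a
unique reduced form: a unique reduced `g` with `f - g ∈ span T`. -/
theorem exists_unique_reduced_form [Field k] [LinearOrder M]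
    (hwf : WellFounded ((· < ·) : M → M → Prop))
    (T : Set (M →₀ k)) (hT : ∀ f ∈ T, IsMonic f)
    (hamb : ∀ m : M, ∀ g₁ g₂ : M →₀ k,
      StepRel T (Finsupp.single m 1) g₁ → StepRel T (Finsupp.single m 1) g₂ →
      g₁ - g₂ ∈ Submodule.span k {h : M →₀ k | h ∈ T ∧ ∃ hh : h ≠ 0, leadMon h hh < m}) :
    ∀ f : M →₀ k, ∃! g : M →₀ k, IsReducedPoly T g ∧ f - g ∈ Submodule.span k T := by
  have : WellFoundedLT M := ⟨hwf⟩
  intro f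
  refine ⟨normalForm T f, ⟨(mem_reducedPolys T).mp (normalForm_mem_reducedPolys T hT f),
    sub_normalForm_mem_span T hT f⟩, ?_⟩
  rintro g ⟨hg, hfg⟩
  have hker : Submodule.span k T ≤ LinearMap.ker (normalForm T) :=
    Submodule.span_le.mpr fun h hh => normalForm_eq_zero_of_mem T hT hamb hh
  have hfg' : normalForm T f = normalForm T g := by
    rw [← sub_eq_zero, ← map_sub]
    exact hker hfg
  rw [hfg', normalForm_eq_self T ((mem_reducedPolys T).mpr hg)]
end
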